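/- Let g = (g_1,...,g_D) with each g_i ∈ C¹(R^D) bounded with bounded first derivatives, and define the Leray-type term L(x) = ∫_{R^D} K_{D,i}(x-y) ∑_{l,m} g_{l,m}(y) g_{m,l}(y) dy with K_{D,i}(x) = x_i/|x|^D, D = 3. If additionally each product g_{l,m} g_{m,l} is Lipschitz and integrable, then L is Lipschitz continuous on R^3. -/

import Mathlib

/-
Write `K z = z_i / ‖z‖³` as `K (1 - χ) + K χ` with a cutoff `χ` that vanishes on the unit
ball and equals `1` outside the ball of radius `2`. The near part is compactly supported and
integrable, since `|K z| ≤ ‖z‖⁻²` and `‖z‖⁻²` is integrable near `0` in dimension three; convolving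
it with the Lipschitz density gives a Lipschitz function. The far part is bounded and Lipschitz, so
convolving the integrable density with it gives a Lipschitz function as well.
-/

open MeasureTheory

noncomputable def pderiv18 (f : EuclideanSpace ℝ (Fin 3) → ℝ) (j : Fin 3)
    (x : EuclideanSpace ℝ (Fin 3)) : ℝ :=
  fderiv ℝ f x (EuclideanSpace.single j 1)

open Metric EuclideanGeometry ContinuousLinearMap
open scoped Convolution NNReal

theorem LipschitzWith.finset_sum {ι α E : Type*} [PseudoMetricSpace α]
    [SeminormedAddCommGroup E] (s : Finset ι) {f : ι → α → E} {K : ι → ℝ≥0}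
    (hf : ∀ i ∈ s, LipschitzWith (K i) (f i)) :
    LipschitzWith (∑ i ∈ s, K i) fun x => ∑ i ∈ s, f i x := by
  induction s using Finset.cons_induction with
  | empty => simpa using LipschitzWith.const (0 : E)
  | cons a s _ ih =>
    simp only [Finset.sum_cons]
    exact (hf a (Finset.mem_cons_self a s)).add (ih fun i hi => hf i (Finset.mem_cons_of_mem hi))

theorem LipschitzWith.mul_of_support_subset {α : Type*} [PseudoMetricSpace α] {χ k : α → ℝ}
    {s : Set α} {Kχ Kk C D : ℝ≥0} (hχ : LipschitzWith Kχ χ) (hχD : ∀ x, |χ x| ≤ D)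
    (hχs : Function.support χ ⊆ s) (hk : LipschitzOnWith Kk k s) (hkC : ∀ x ∈ s, |k x| ≤ C) :
    LipschitzWith (Kχ * C + D * Kk) fun x => χ x * k x := by
  have hχ0 : ∀ x ∉ s, χ x = 0 := fun x hx => Function.notMem_support.1 fun h => hx (hχs h)
  have mixed : ∀ x ∈ s, ∀ y ∉ s, |χ x * k x - χ y * k y| ≤ (Kχ * C + D * Kk) * dist x y := by
    intro x hx y hy
    calc |χ x * k x - χ y * k y| = |χ x - χ y| * |k x| := by rw [hχ0 y hy]; simp [abs_mul]
      _ ≤ (Kχ * dist x y) * C := by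
          gcongr
          · exact hχ.dist_le_mul x y
          · exact hkC x hx
      _ ≤ (Kχ * C + D * Kk) * dist x y := by
          have : 0 ≤ (D * Kk : ℝ) * dist x y := by positivity
          linarith
  refine LipschitzWith.of_dist_le_mul fun x y => ?_
  push_cast
  rw [Real.dist_eq]
  by_cases hx : x ∈ s <;> by_cases hy : y ∈ s
  · calc |χ x * k x - χ y * k y| = |(χ x - χ y) * k x + χ y * (k x - k y)| := by ring_nf
      _ ≤ |χ x - χ y| * |k x| + |χ y| * |k x - k y| := by
          rw [← abs_mul, ← abs_mul]; exact abs_add_le _ _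
      _ ≤ (Kχ * dist x y) * C + D * (Kk * dist x y) := by
          gcongr
          · exact hχ.dist_le_mul x y
          · exact hkC x hx
          · exact hχD y
          · exact hk.dist_le_mul x hx y hy
      _ = (Kχ * C + D * Kk) * dist x y := by ring
  · exact_mod_cast mixed x hx y hy
  · rw [abs_sub_comm, dist_comm]; exact_mod_cast mixed y hy x hx
  · simp [hχ0 x hx, hχ0 y hy]; positivity

section Convolution

variable {𝕜 G E E' F : Type*} [NontriviallyNormedField 𝕜]
  [NormedAddCommGroup E] [NormedSpace 𝕜 E] [NormedAddCommGroup E'] [NormedSpace 𝕜 E']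
  [NormedAddCommGroup F] [NormedSpace 𝕜 F]
  [NormedAddCommGroup G] [MeasurableSpace G] {μ : Measure G}
  {L : E →L[𝕜] E' →L[𝕜] F} {f : G → E} {g : G → E'} {K : ℝ≥0}

theorem MeasureTheory.Integrable.convolutionExists_of_norm_le [MeasurableAdd₂ G] [MeasurableNeg G]
    [SFinite μ] [μ.IsAddLeftInvariant] {C : ℝ} (hf : Integrable f μ) (hg : AEStronglyMeasurable g μ)
    (hgC : ∀ x, ‖g x‖ ≤ C) : ConvolutionExists f g L μ := fun _ =>
  BddAbove.convolutionExistsAt L ⟨C, by rintro _ ⟨t, -, rfl⟩; exact hgC t⟩ MeasurableSet.univ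
    (Set.subset_univ _) hf.integrableOn hg

variable [NormedSpace ℝ F]

theorem lipschitzWith_convolution_of_lipschitzWith_right (hf : Integrable f μ)
    (hg : LipschitzWith K g) (hfg : ConvolutionExists f g L μ) :
    LipschitzWith (Real.toNNReal (‖L‖ * (∫ t, ‖f t‖ ∂μ) * K)) (f ⋆[L, μ] g) := by
  refine LipschitzWith.of_dist_le' fun x y => ?_
  have hbound : ∀ t,
      ‖L (f t) (g (x - t)) - L (f t) (g (y - t))‖ ≤ ‖L‖ * ‖f t‖ * (K * dist x y) := by
    intro t
    rw [← map_sub, ← dist_sub_right x y t]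
    calc ‖L (f t) (g (x - t) - g (y - t))‖ ≤ ‖L‖ * ‖f t‖ * ‖g (x - t) - g (y - t)‖ :=
          L.le_opNorm₂ _ _
      _ ≤ ‖L‖ * ‖f t‖ * (K * dist (x - t) (y - t)) := by
          rw [← dist_eq_norm]; gcongr; exact hg.dist_le_mul _ _
  calc dist ((f ⋆[L, μ] g) x) ((f ⋆[L, μ] g) y)
      = ‖∫ t, (L (f t) (g (x - t)) - L (f t) (g (y - t))) ∂μ‖ := by
        rw [dist_eq_norm, convolution_def, convolution_def, integral_sub (hfg x) (hfg y)]
    _ ≤ ∫ t, ‖L‖ * ‖f t‖ * (K * dist x y) ∂μ :=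
        norm_integral_le_of_norm_le ((hf.norm.const_mul _).mul_const _)
          (Filter.Eventually.of_forall hbound)
    _ = ‖L‖ * (∫ t, ‖f t‖ ∂μ) * K * dist x y := by
        rw [integral_mul_const, integral_const_mul]; ring

theorem lipschitzWith_convolution_of_lipschitzWith_left [MeasurableAdd G] [MeasurableNeg G]
    [μ.IsAddLeftInvariant] [μ.IsNegInvariant] (hf : LipschitzWith K f)
    (hg : Integrable g μ) (hfg : ConvolutionExists f g L μ) :
    LipschitzWith (Real.toNNReal (‖L‖ * (∫ t, ‖g t‖ ∂μ) * K)) (f ⋆[L, μ] g) := by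
  rw [← convolution_flip, ← opNorm_flip L]
  exact lipschitzWith_convolution_of_lipschitzWith_right hg hf fun x =>
    convolutionExistsAt_flip.2 (hfg x)

end Convolution

theorem norm_norm_smul_sub_norm_smul_le {V : Type*} [SeminormedAddCommGroup V] [NormedSpace ℝ V]
    (u v : V) : ‖‖u‖ • u - ‖v‖ • v‖ ≤ (‖u‖ + ‖v‖) * ‖u - v‖ := by
  calc ‖‖u‖ • u - ‖v‖ • v‖ = ‖‖u‖ • (u - v) + (‖u‖ - ‖v‖) • v‖ := by
        rw [smul_sub, sub_smul]; abel_nf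
    _ ≤ ‖u‖ * ‖u - v‖ + |‖u‖ - ‖v‖| * ‖v‖ := by
        refine (norm_add_le _ _).trans ?_
        rw [norm_smul, norm_smul, norm_norm, Real.norm_eq_abs]
    _ ≤ ‖u‖ * ‖u - v‖ + ‖u - v‖ * ‖v‖ := by gcongr; exact abs_norm_sub_norm_le u v
    _ = (‖u‖ + ‖v‖) * ‖u - v‖ := by ring

section InverseCube

variable {V : Type*} [NormedAddCommGroup V] [InnerProductSpace ℝ V]

theorem norm_inversion_zero_one (z : V) : ‖inversion 0 1 z‖ = ‖z‖⁻¹ := by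
  rcases eq_or_ne z 0 with rfl | hz
  · simp
  · simp [inversion, norm_smul]
    field_simp

theorem inv_norm_pow_three_smul_eq (z : V) :
    (‖z‖ ^ 3)⁻¹ • z = ‖inversion 0 1 z‖ • inversion 0 1 z := by
  rw [norm_inversion_zero_one]
  simp [inversion, smul_smul]
  congr 1; ring

/- `z / ‖z‖³ = ‖w‖ • w` for the inverse `w` of `z` in the unit sphere: inversion does not increase
distances outside the unit ball and lands in it, where `w ↦ ‖w‖ • w` is `2`-Lipschitz. -/
theorem lipschitzOnWith_inv_norm_pow_three_smul :
    LipschitzOnWith 2 (fun z : V => (‖z‖ ^ 3)⁻¹ • z) {z | 1 ≤ ‖z‖} := by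
  refine LipschitzOnWith.of_dist_le_mul fun a (ha : 1 ≤ ‖a‖) b (hb : 1 ≤ ‖b‖) => ?_
  have ha0 : a ≠ 0 := norm_pos_iff.1 (one_pos.trans_le ha)
  have hb0 : b ≠ 0 := norm_pos_iff.1 (one_pos.trans_le hb)
  have hinv : ‖a‖⁻¹ + ‖b‖⁻¹ ≤ 2 := by
    linarith [inv_le_one_of_one_le₀ ha, inv_le_one_of_one_le₀ hb]
  have hab : 1 / (‖a‖ * ‖b‖) ≤ 1 := by
    rw [div_le_one (by positivity)]; nlinarith
  calc dist ((‖a‖ ^ 3)⁻¹ • a) ((‖b‖ ^ 3)⁻¹ • b)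
      ≤ (‖inversion 0 1 a‖ + ‖inversion 0 1 b‖) * dist (inversion 0 1 a) (inversion 0 1 b) := by
        rw [inv_norm_pow_three_smul_eq, inv_norm_pow_three_smul_eq, dist_eq_norm, dist_eq_norm]
        exact norm_norm_smul_sub_norm_smul_le _ _
    _ = (‖a‖⁻¹ + ‖b‖⁻¹) * (1 / (‖a‖ * ‖b‖) * dist a b) := by
        rw [dist_inversion_inversion ha0 hb0, norm_inversion_zero_one, norm_inversion_zero_one,
          dist_zero_right, dist_zero_right, one_pow]
    _ ≤ 2 * (1 * dist a b) := by gcongr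
    _ = 2 * dist a b := by ring

end InverseCube

section Cutoff

variable {V : Type*} [SeminormedAddCommGroup V]

def farCutoff (z : V) : ℝ := min 1 (max (‖z‖ - 1) 0)

theorem lipschitzWith_farCutoff : LipschitzWith 1 (farCutoff : V → ℝ) := by
  show LipschitzWith 1 fun z : V => min 1 (max (‖z‖ - 1) 0)
  simpa using ((lipschitzWith_one_norm.sub (LipschitzWith.const (1 : ℝ))).max_const 0).const_min 1

theorem farCutoff_nonneg (z : V) : 0 ≤ farCutoff z := le_min zero_le_one (le_max_right _ _)

theorem farCutoff_le_one (z : V) : farCutoff z ≤ 1 := min_le_left _ _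

theorem farCutoff_eq_zero {z : V} (hz : ‖z‖ ≤ 1) : farCutoff z = 0 := by
  simp [farCutoff, hz]

theorem farCutoff_eq_one {z : V} (hz : 2 ≤ ‖z‖) : farCutoff z = 1 := by
  unfold farCutoff; grind

theorem support_farCutoff_subset : Function.support (farCutoff : V → ℝ) ⊆ {z | 1 ≤ ‖z‖} :=
  fun _ hz => le_of_not_ge fun h => hz (farCutoff_eq_zero h)

theorem abs_farCutoff_le_one (z : V) : |farCutoff z| ≤ 1 := by
  rw [abs_of_nonneg (farCutoff_nonneg z)]; exact farCutoff_le_one z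

theorem abs_one_sub_farCutoff_le_one (z : V) : |1 - farCutoff z| ≤ 1 :=
  abs_le.2 ⟨by linarith [farCutoff_le_one z], by linarith [farCutoff_nonneg z]⟩

end Cutoff

local notation "ℝ³" => EuclideanSpace ℝ (Fin 3)

noncomputable def lerayKernel (i : Fin 3) (z : ℝ³) : ℝ := z i / ‖z‖ ^ 3

noncomputable def lerayKernelNear (i : Fin 3) (z : ℝ³) : ℝ := (1 - farCutoff z) * lerayKernel i z

noncomputable def lerayKernelFar (i : Fin 3) (z : ℝ³) : ℝ := farCutoff z * lerayKernel i z

theorem lerayKernel_eq_apply (i : Fin 3) (z : ℝ³) : lerayKernel i z = ((‖z‖ ^ 3)⁻¹ • z) i := by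
  simp [lerayKernel, div_eq_inv_mul]

theorem abs_lerayKernel_le (i : Fin 3) (z : ℝ³) : |lerayKernel i z| ≤ (‖z‖ ^ 2)⁻¹ := by
  rcases eq_or_ne z 0 with rfl | hz
  · simp [lerayKernel]
  calc |lerayKernel i z| ≤ ‖(‖z‖ ^ 3)⁻¹ • z‖ := by
        rw [lerayKernel_eq_apply, ← Real.norm_eq_abs]; exact PiLp.norm_apply_le _ i
    _ = (‖z‖ ^ 2)⁻¹ := by
        rw [norm_smul, norm_inv, norm_pow, norm_norm]
        field_simp

theorem lipschitzOnWith_lerayKernel (i : Fin 3) :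
    LipschitzOnWith 2 (lerayKernel i) {z | 1 ≤ ‖z‖} := by
  have hproj : LipschitzWith 1 fun z : ℝ³ => z i := LipschitzWith.of_dist_le_mul fun a b => by
    simpa [dist_eq_norm] using PiLp.norm_apply_le (a - b) i
  rw [show lerayKernel i = (fun z : ℝ³ => z i) ∘ fun z => (‖z‖ ^ 3)⁻¹ • z from
    funext (lerayKernel_eq_apply i)]
  simpa using hproj.comp_lipschitzOnWith lipschitzOnWith_inv_norm_pow_three_smul

theorem lerayKernelNear_add_lerayKernelFar (i : Fin 3) :
    lerayKernelNear i + lerayKernelFar i = lerayKernel i := by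
  ext z; simp only [Pi.add_apply, lerayKernelNear, lerayKernelFar]; ring

theorem lerayKernelNear_eq_zero (i : Fin 3) {z : ℝ³} (hz : 2 ≤ ‖z‖) : lerayKernelNear i z = 0 := by
  simp [lerayKernelNear, farCutoff_eq_one hz]

theorem hasCompactSupport_lerayKernelNear (i : Fin 3) : HasCompactSupport (lerayKernelNear i) :=
  HasCompactSupport.intro (isCompact_closedBall 0 2) fun z hz =>
    lerayKernelNear_eq_zero i (by simpa using hz : 2 < ‖z‖).le

theorem integrable_lerayKernelNear (i : Fin 3) : Integrable (lerayKernelNear i) := by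
  refine IntegrableOn.integrable_of_forall_notMem_eq_zero (s := ball 0 2) ?_ fun z hz =>
    lerayKernelNear_eq_zero i (by simpa using hz)
  refine integrableOn_ball_of_norm_le_rpow (α := 2) (C := 1) (by simp) (by simp; norm_num) ?_ ?_
  · refine Filter.Eventually.of_forall fun z => ?_
    rw [Real.norm_eq_abs, lerayKernelNear, abs_mul, Real.rpow_neg (norm_nonneg z), one_mul]
    calc |1 - farCutoff z| * |lerayKernel i z| ≤ 1 * (‖z‖ ^ 2)⁻¹ := by
          gcongr
          · exact abs_one_sub_farCutoff_le_one z
          · exact abs_lerayKernel_le i z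
      _ = (‖z‖ ^ (2 : ℝ))⁻¹ := by norm_cast; ring
  · unfold lerayKernelNear lerayKernel farCutoff
    fun_prop

theorem abs_lerayKernel_le_one (i : Fin 3) {z : ℝ³} (hz : 1 ≤ ‖z‖) : |lerayKernel i z| ≤ 1 :=
  (abs_lerayKernel_le i z).trans (inv_le_one_of_one_le₀ (one_le_pow₀ hz))

theorem abs_lerayKernelFar_le_one (i : Fin 3) (z : ℝ³) : |lerayKernelFar i z| ≤ 1 := by
  rcases le_total ‖z‖ 1 with hz | hz
  · simp [lerayKernelFar, farCutoff_eq_zero hz]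
  · rw [lerayKernelFar, abs_mul, ← one_mul 1]
    exact mul_le_mul (abs_farCutoff_le_one z) (abs_lerayKernel_le_one i hz) (abs_nonneg _)
      zero_le_one

theorem lipschitzWith_lerayKernelFar (i : Fin 3) : LipschitzWith 3 (lerayKernelFar i) := by
  have h := lipschitzWith_farCutoff.mul_of_support_subset (C := 1) (D := 1)
    (by exact_mod_cast abs_farCutoff_le_one) support_farCutoff_subset
    (lipschitzOnWith_lerayKernel i) fun z hz => by exact_mod_cast abs_lerayKernel_le_one i hz
  rw [show (1 : ℝ≥0) * 1 + 1 * 2 = 3 by norm_num] at h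
  exact h

theorem stmt_18_general (i : Fin 3) (g : Fin 3 → EuclideanSpace ℝ (Fin 3) → ℝ)
    (hlip : ∀ l m : Fin 3, ∃ K : NNReal,
      LipschitzWith K (fun y => pderiv18 (g l) m y * pderiv18 (g m) l y))
    (hint : ∀ l m : Fin 3,
      Integrable (fun y => pderiv18 (g l) m y * pderiv18 (g m) l y)) :
    ∃ K : NNReal, LipschitzWith K (fun x : EuclideanSpace ℝ (Fin 3) =>
      ∫ y, ((x - y) i / ‖x - y‖ ^ 3) *
        ∑ l, ∑ m, pderiv18 (g l) m y * pderiv18 (g m) l y) := by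
  set F : ℝ³ → ℝ := fun y => ∑ l, ∑ m, pderiv18 (g l) m y * pderiv18 (g m) l y
  choose KF hKF using hlip
  have hF_lip : LipschitzWith (∑ l, ∑ m, KF l m) F :=
    LipschitzWith.finset_sum _ fun l _ => LipschitzWith.finset_sum _ fun m _ => hKF l m
  have hF_int : Integrable F :=
    integrable_finsetSum _ fun l _ => integrable_finsetSum _ fun m _ => hint l m
  have h_near : ConvolutionExists F (lerayKernelNear i) (lsmul ℝ ℝ) volume :=
    (hasCompactSupport_lerayKernelNear i).convolutionExists_right_of_continuous_left _
      hF_lip.continuous (integrable_lerayKernelNear i).locallyIntegrable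
  have h_far : ConvolutionExists F (lerayKernelFar i) (lsmul ℝ ℝ) volume :=
    hF_int.convolutionExists_of_norm_le
      (lipschitzWith_lerayKernelFar i).continuous.aestronglyMeasurable (abs_lerayKernelFar_le_one i)
  have h_split : (fun x => ∫ y, (x - y) i / ‖x - y‖ ^ 3 * F y) =
      F ⋆ lerayKernelNear i + F ⋆ lerayKernelFar i := by
    rw [← h_near.distrib_add h_far, lerayKernelNear_add_lerayKernelFar]
    ext x
    simp_rw [convolution_lsmul, smul_eq_mul, mul_comm (F _)]
    rfl
  rw [h_split]
  exact ⟨_, (lipschitzWith_convolution_of_lipschitzWith_left hF_lip (integrable_lerayKernelNear i)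
    h_near).add (lipschitzWith_convolution_of_lipschitzWith_right hF_int
    (lipschitzWith_lerayKernelFar i) h_far)⟩

/-- Lipschitz continuity of the Leray projection term in dimension 3. -/
theorem stmt_18 (i : Fin 3) (g : Fin 3 → EuclideanSpace ℝ (Fin 3) → ℝ)
    (hg : ∀ l, ContDiff ℝ 1 (g l))
    (hbd : ∃ M : ℝ, ∀ l x, |g l x| ≤ M ∧ ‖fderiv ℝ (g l) x‖ ≤ M)
    (hlip : ∀ l m : Fin 3, ∃ K : NNReal,
      LipschitzWith K (fun y => pderiv18 (g l) m y * pderiv18 (g m) l y))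
    (hint : ∀ l m : Fin 3,
      Integrable (fun y => pderiv18 (g l) m y * pderiv18 (g m) l y)) :
    ∃ K : NNReal, LipschitzWith K (fun x : EuclideanSpace ℝ (Fin 3) =>
      ∫ y, ((x - y) i / ‖x - y‖ ^ 3) *
        ∑ l, ∑ m, pderiv18 (g l) m y * pderiv18 (g m) l y) :=
  stmt_18_general i g hlip hint
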